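/- Let (R,M) be a ΣPIR (an infinite special principal ideal ring) and n > 1 an integer. Then the diagonal extension R ⊆ R^n has FIP if and only if n = 2. -/

import Mathlib

/-- `(R, M)` is a special principal ideal ring (SPIR): a principal ideal ring, not a field,
whose unique nonzero prime ideal is `M`, with `M` nilpotent. -/
def IsSPIR (R : Type*) [CommRing R] (M : Ideal R) : Prop :=
  IsPrincipalIdealRing R ∧ ¬ IsField R ∧ M.IsPrime ∧ M ≠ ⊥ ∧
    (∀ P : Ideal R, P.IsPrime → P ≠ ⊥ → P = M) ∧ ∃ p : ℕ, 0 < p ∧ M ^ p = ⊥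

/-!
An SPIR `R` is local with nilpotent principal maximal ideal `M = (t)`, so every element of `R` is
associated to a power of `t` and `R` has only finitely many ideals. A subalgebra `A` of `R²` is
determined by the ideal `{x | (x, 0) ∈ A}`, which gives FIP for `n = 2`.

For `n ≥ 3`, the residue field `R/M` is infinite, since otherwise every `R/Mᵏ`, and hence `R`,
would be finite. Choose `m ≠ 0` with `M m = 0`; then `R m ≅ R/M`, and the square-zero vectors
`(0, m, x, 0, …)` with `x ∈ R m` span pairwise distinct subalgebras `R + R v` of `Rⁿ`.
-/

open IsLocalRing

namespace IsSPIR

variable {R : Type*} [CommRing R] {M : Ideal R}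

theorem isLocalRing (h : IsSPIR R M) : IsLocalRing R :=
  .of_unique_nonzero_prime ⟨M, ⟨h.2.2.2.1, h.2.2.1⟩, fun P hP ↦ h.2.2.2.2.1 P hP.2 hP.1⟩

theorem eq_maximalIdeal [IsLocalRing R] (h : IsSPIR R M) : M = maximalIdeal R := by
  obtain ⟨-, -, hM, hM0, huniq, -⟩ := h
  exact (huniq _ inferInstance (ne_bot_of_le_ne_bot hM0 (le_maximalIdeal hM.ne_top))).symm

end IsSPIR

section Ideals

variable {R : Type*} [CommRing R]

theorem Ideal.exists_ne_zero_forall_mul_eq_zero_of_pow_eq_bot {I : Ideal R} (hI : I ≠ ⊥)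
    {p : ℕ} (hp : I ^ p = ⊥) : ∃ m ∈ I, m ≠ 0 ∧ ∀ x ∈ I, x * m = 0 := by
  classical
  have hex : ∃ k, I ^ k = ⊥ := ⟨p, hp⟩
  obtain ⟨k, hk⟩ : ∃ k, Nat.find hex = k + 1 := Nat.exists_eq_add_one_of_ne_zero fun h0 ↦ by
    have htop := Nat.find_spec hex
    rw [h0, pow_zero, Ideal.one_eq_top] at htop
    exact hI (eq_bot_iff.2 (htop ▸ le_top))
  have hk_succ : I ^ (k + 1) = ⊥ := hk ▸ Nat.find_spec hex
  have hk_pow : I ^ k ≠ ⊥ := Nat.find_min hex (show k < Nat.find hex by omega)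
  obtain ⟨m, hm, hm0⟩ := Submodule.exists_mem_ne_zero_of_ne_bot hk_pow
  have hk0 : k ≠ 0 := by
    rintro rfl
    exact hI (by simpa using hk_succ)
  refine ⟨m, Ideal.pow_le_self hk0 hm, hm0, fun x hx ↦ ?_⟩
  simpa [← pow_succ', hk_succ] using Ideal.mul_mem_mul hx hm

theorem Ideal.infinite_quotient_of_pow_eq_bot [Infinite R] {I : Ideal R} (hI : I.FG) {q : ℕ}
    (hq : I ^ q = ⊥) : Infinite (R ⧸ I) := by
  by_contra hfin
  have := not_infinite_iff_finite.mp hfin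
  have hbot := I.finite_quotient_pow hI q
  rw [hq] at hbot
  exact not_finite_iff_infinite.mpr ‹Infinite R› (.of_equiv _ (RingEquiv.quotientBot R).toEquiv)

theorem Ideal.infinite_span_singleton_of_mul_eq_zero {M : Ideal R} (hM : M.IsMaximal)
    [Infinite (R ⧸ M)] {m : R} (hm0 : m ≠ 0) (hm : ∀ x ∈ M, x * m = 0) :
    Infinite (Ideal.span {m}) := by
  have hann : M = Ideal.torsionOf R R m :=
    hM.eq_of_le (by rwa [Ne, Ideal.torsionOf_eq_top_iff]) fun x hx ↦
      (Ideal.mem_torsionOf_iff m x).mpr (hm x hx)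
  subst hann
  exact .of_injective _ (Ideal.quotTorsionOfEquivSpanSingleton R R m).injective

theorem IsLocalRing.exists_associated_pow_of_not_dvd [IsLocalRing R] {t : R}
    (ht : maximalIdeal R = Ideal.span {t}) :
    ∀ (N : ℕ) (a : R), ¬ t ^ N ∣ a → ∃ j < N, Associated (t ^ j) a
  | 0, a, ha => (ha (by simp)).elim
  | N + 1, a, ha => by
    by_cases hu : IsUnit a
    · exact ⟨0, N.succ_pos, by simpa using (associated_one_iff_isUnit.mpr hu).symm⟩
    · obtain ⟨b, rfl⟩ : t ∣ a :=
        Ideal.mem_span_singleton.mp (ht ▸ (mem_maximalIdeal a).mpr hu)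
      obtain ⟨j, hj, hb⟩ := exists_associated_pow_of_not_dvd ht N b
        fun h ↦ ha (pow_succ' t N ▸ mul_dvd_mul_left t h)
      exact ⟨j + 1, by omega, pow_succ' t j ▸ hb.mul_left t⟩

theorem IsLocalRing.finite_ideal_of_maximalIdeal_pow_eq_bot [IsPrincipalIdealRing R]
    [IsLocalRing R] {q : ℕ} (hq : maximalIdeal R ^ q = ⊥) : Finite (Ideal R) := by
  set t := Submodule.IsPrincipal.generator (maximalIdeal R)
  have ht : maximalIdeal R = Ideal.span {t} := (Ideal.span_singleton_generator _).symm
  have htq : t ^ q = 0 := by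
    have := Ideal.pow_mem_pow (ht ▸ Ideal.mem_span_singleton_self t : t ∈ maximalIdeal R) q
    rwa [hq, Ideal.mem_bot] at this
  refine .of_surjective (fun j : Fin (q + 1) ↦ Ideal.span {t ^ (j : ℕ)}) fun I ↦ ?_
  rw [← Ideal.span_singleton_generator I]
  by_cases hdvd : t ^ q ∣ Submodule.IsPrincipal.generator I
  · refine ⟨Fin.last q, ?_⟩
    simp [htq, zero_dvd_iff.mp (htq ▸ hdvd)]
  · obtain ⟨j, hj, u, hu⟩ := exists_associated_pow_of_not_dvd ht q _ hdvd
    exact ⟨⟨j, by omega⟩, by simp [← hu, Ideal.span_singleton_mul_right_unit u.isUnit]⟩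

end Ideals

section SubalgebrasOfPi

variable {R : Type*} [CommRing R]

theorem Pi.subalgebra_fin_two_le_of_comap_single_le {A B : Subalgebra R (Fin 2 → R)}
    (h : A.toSubmodule.comap (LinearMap.single R (fun _ ↦ R) 0) ≤
      B.toSubmodule.comap (LinearMap.single R (fun _ ↦ R) 0)) : A ≤ B := by
  intro w hw
  have hsingle : Pi.single 0 (w 0 - w 1) = w - algebraMap R (Fin 2 → R) (w 1) := by
    ext i; fin_cases i <;> simp
  have hmemA : Pi.single 0 (w 0 - w 1) ∈ A := hsingle ▸ A.sub_mem hw (A.algebraMap_mem _)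
  have hmem : w - algebraMap R (Fin 2 → R) (w 1) ∈ B := hsingle ▸ h hmemA
  simpa using B.add_mem hmem (B.algebraMap_mem (w 1))

theorem Pi.finite_subalgebra_fin_two [Finite (Ideal R)] : Finite (Subalgebra R (Fin 2 → R)) :=
  .of_injective (fun A ↦ A.toSubmodule.comap (LinearMap.single R (fun _ ↦ R) 0)) fun _ _ h ↦
    le_antisymm (subalgebra_fin_two_le_of_comap_single_le h.le)
      (subalgebra_fin_two_le_of_comap_single_le h.ge)

variable {A : Type*} [CommRing A] [Algebra R A]

def Subalgebra.ofSqEqZero (v : A) (hv : v * v = 0) : Subalgebra R A :=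
  (Submodule.span R {1, v}).toSubalgebra (Submodule.subset_span (by simp)) fun x y hx hy ↦ by
    obtain ⟨a, b, rfl⟩ := Submodule.mem_span_pair.mp hx
    obtain ⟨c, d, rfl⟩ := Submodule.mem_span_pair.mp hy
    refine Submodule.mem_span_pair.mpr ⟨a * c, a * d + b * c, ?_⟩
    simp only [Algebra.smul_def, map_mul, map_add, mul_one]
    linear_combination (-(algebraMap R A b * algebraMap R A d)) * hv

theorem Subalgebra.mem_ofSqEqZero {v : A} {hv : v * v = 0} {w : A} :
    w ∈ ofSqEqZero (R := R) v hv ↔ ∃ a b : R, a • 1 + b • v = w :=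
  Submodule.mem_span_pair

theorem Pi.infinite_subalgebra_of_mul_self_eq_zero {ι : Type*} [DecidableEq ι]
    {i₀ i₁ i₂ : ι} (h₀₁ : i₀ ≠ i₁) (h₀₂ : i₀ ≠ i₂) (h₁₂ : i₁ ≠ i₂) {m : R} (hm : m * m = 0)
    [Infinite (Ideal.span {m})] : Infinite (Subalgebra R (ι → R)) := by
  let v (x : R) : ι → R := Pi.single i₁ m + Pi.single i₂ x
  have hv (x : Ideal.span {m}) : v x * v x = 0 := by
    obtain ⟨r, hr⟩ := Ideal.mem_span_singleton'.mp x.2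
    have hx : (x : R) * x = 0 := by rw [← hr, mul_mul_mul_comm, hm, mul_zero]
    ext i
    by_cases h₁ : i = i₁ <;> by_cases h₂ : i = i₂ <;>
      simp_all [v]
  refine .of_injective (fun x : Ideal.span {m} ↦ Subalgebra.ofSqEqZero (v x) (hv x))
    fun x y hxy ↦ ?_
  have hy : v y ∈ Subalgebra.ofSqEqZero (R := R) (v x) (hv x) := by
    rw [show Subalgebra.ofSqEqZero (v x) (hv x) = Subalgebra.ofSqEqZero (v y) (hv y) from hxy]
    exact Subalgebra.mem_ofSqEqZero.mpr ⟨0, 1, by simp⟩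
  obtain ⟨a, b, hab⟩ := Subalgebra.mem_ofSqEqZero.mp hy
  have hab₀ := congrFun hab i₀
  have hab₁ := congrFun hab i₁
  have hab₂ := congrFun hab i₂
  simp only [v, add_apply, smul_add, smul_apply, one_apply, smul_eq_mul, mul_one, mul_zero,
    single_eq_same, single_eq_of_ne, ne_eq, not_false_eq_true, h₀₁, h₀₂, h₁₂, h₁₂.symm,
    add_zero, zero_add] at hab₀ hab₁ hab₂
  obtain ⟨r, hr⟩ := Ideal.mem_span_singleton'.mp x.2
  ext
  linear_combination hab₂ - r * hab₁ + (r - 1) * hab₀ + (b - 1) * hr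

end SubalgebrasOfPi

/-- Let `(R, M)` be a ΣPIR (an infinite SPIR) and `n > 1`. Then the diagonal extension
`R ⊆ R^n` has FIP iff `n = 2`. -/
theorem fip_power_sigma_pir_iff (R : Type*) [CommRing R] (M : Ideal R)
    (hspir : IsSPIR R M) (hinf : Infinite R) (n : ℕ) (hn : 1 < n) :
    Finite (Subalgebra R (Fin n → R)) ↔ n = 2 := by
  have := hspir.isLocalRing
  obtain rfl := hspir.eq_maximalIdeal
  obtain ⟨hpir, -, -, hM0, -, q, -, hq⟩ := hspir
  refine ⟨fun hfin ↦ ?_, ?_⟩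
  · by_contra hn2
    obtain ⟨m, hmM, hm0, hm⟩ := Ideal.exists_ne_zero_forall_mul_eq_zero_of_pow_eq_bot hM0 hq
    have := Ideal.infinite_quotient_of_pow_eq_bot (IsNoetherian.noetherian _) hq
    have := Ideal.infinite_span_singleton_of_mul_eq_zero (maximalIdeal.isMaximal R) hm0 hm
    have := Pi.infinite_subalgebra_of_mul_self_eq_zero
      (i₀ := (⟨0, by omega⟩ : Fin n)) (i₁ := ⟨1, by omega⟩) (i₂ := ⟨2, by omega⟩)
      (by simp) (by simp) (by simp) (hm m hmM)
    exact not_finite (Subalgebra R (Fin n → R))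
  · rintro rfl
    have := IsLocalRing.finite_ideal_of_maximalIdeal_pow_eq_bot hq
    exact Pi.finite_subalgebra_fin_two
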